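/- Let γ = 1 and α₁ + α₂ = 1 with α₁, α₂ ∈ (0,1). Then the vectors x_u and x_v defined by x_u = (α₁+γα₂, α₂+γα₁, (1-α₁)+γ(1-α₂), (1-α₂)+γ(1-α₁), (1+γ)/2, (1+γ)/2) and x_v = ((1-α₁)+γ(1-α₂), (1-α₂)+γ(1-α₁), α₁+γα₂, α₂+γα₁, (1+γ)/2, (1+γ)/2) are equal; i.e., without time decay, the communities of a Temporal SBM with α₁+α₂=1 are indistinguishable in the expected node embeddings. -/
import Mathlib

/-- Without time decay (`γ = 1`) and with `α₁ + α₂ = 1`, the expected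
node-embedding block vectors of the two communities coincide. -/
theorem tsbm_embeddings_indistinguishable (α₁ α₂ γ : ℝ)
    (h₁ : 0 < α₁ ∧ α₁ < 1) (h₂ : 0 < α₂ ∧ α₂ < 1) (hγ : γ = 1) (hα : α₁ + α₂ = 1)
    (xu xv : Fin 6 → ℝ)
    (hxu : xu = ![α₁ + γ * α₂, α₂ + γ * α₁, (1 - α₁) + γ * (1 - α₂),
      (1 - α₂) + γ * (1 - α₁), (1 + γ) / 2, (1 + γ) / 2])
    (hxv : xv = ![(1 - α₁) + γ * (1 - α₂), (1 - α₂) + γ * (1 - α₁),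
      α₁ + γ * α₂, α₂ + γ * α₁, (1 + γ) / 2, (1 + γ) / 2]) :
    xu = xv := by
  subst hγ
  have e1 : α₁ + 1 * α₂ = (1 - α₁) + 1 * (1 - α₂) := by linarith
  have e2 : α₂ + 1 * α₁ = (1 - α₂) + 1 * (1 - α₁) := by linarith
  rw [hxu, hxv, e1, e2]
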